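/- Let A, B be bounded linear operators on G. The linear relation Λ^{A,B} is self-adjoint if and only if A B* = B A* and ker M^{A,B} = {0}. -/

import Mathlib

open ContinuousLinearMap

variable {G : Type*} [NormedAddCommGroup G] [InnerProductSpace ℂ G] [CompleteSpace G]

/-- The operator `M^{A,B}` on `G × G`, `(x₁,x₂) ↦ (A x₁ - B x₂, B x₁ + A x₂)`. -/
noncomputable def MAB (A B : G →L[ℂ] G) : (G × G) →L[ℂ] (G × G) :=
  ((A.comp (fst ℂ G G)) - (B.comp (snd ℂ G G))).prod
    ((B.comp (fst ℂ G G)) + (A.comp (snd ℂ G G)))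

/-- The linear relation `Λ^{A,B} = {(x₁,x₂) : A x₁ = B x₂}`. -/
def LambdaAB (A B : G →L[ℂ] G) : Submodule ℂ (G × G) where
  carrier := {p | A p.1 = B p.2}
  add_mem' := by
    intro a b ha hb
    simp only [Set.mem_setOf_eq] at *
    simp [ha, hb]
  zero_mem' := by simp
  smul_mem' := by
    intro c p hp
    simp only [Set.mem_setOf_eq] at *
    simp [hp]

/-- The adjoint of a linear relation. -/
def relAdjoint (Λ : Submodule ℂ (G × G)) : Submodule ℂ (G × G) where
  carrier := {p | ∀ q ∈ Λ, (inner ℂ p.1 q.2 : ℂ) = inner ℂ p.2 q.1}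
  add_mem' := by
    intro a b ha hb q hq
    simp [inner_add_left, ha q hq, hb q hq]
  zero_mem' := by
    intro q hq; simp
  smul_mem' := by
    intro c p hp q hq
    simp [inner_smul_left, hp q hq]

/-- A linear relation is self-adjoint if it equals its adjoint. -/
def IsSelfAdjointRel (Λ : Submodule ℂ (G × G)) : Prop := relAdjoint Λ = Λ

/-- A bounded operator is boundedly invertible if it has a bounded two-sided inverse. -/
def IsBoundedlyInvertible {E F : Type*} [NormedAddCommGroup E] [NormedSpace ℂ E]
    [NormedAddCommGroup F] [NormedSpace ℂ F] (T : E →L[ℂ] F) : Prop :=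
  ∃ T' : F →L[ℂ] E, (∀ x, T' (T x) = x) ∧ (∀ y, T (T' y) = y)

/-- The pair `(A,B)` is normalized if `A B* = B A*` and `M^{A,B}` is boundedly invertible. -/
noncomputable def IsNormalized (A B : G →L[ℂ] G) : Prop :=
  A ∘L adjoint B = B ∘L adjoint A ∧ IsBoundedlyInvertible (MAB A B)

/-!
The vectors `(B* y, A* y)` always lie in `(Λ^{A,B})*`, and pairing an element of `(Λ^{A,B})*`
with them shows that `(Λ^{A,B})* ⊆ Λ^{A,B}` holds exactly when `A B* = B A*`. The kernel of
`M^{A,B}` consists of the `x ∈ Λ^{A,B}` with `(x₂, -x₁) ∈ Λ^{A,B}`; if the relation is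
self-adjoint, pairing such an `x` with `(x₂, -x₁)` gives `‖x₁‖² + ‖x₂‖² = 0`. Conversely, when
`(Λ^{A,B})* ⊆ Λ^{A,B}`, an element `w` of `Λ^{A,B}` orthogonal to `(Λ^{A,B})*` is in particular
orthogonal to every `(B* y, A* y)`, i.e. `B w₁ + A w₂ = 0`, so it lies in `ker M^{A,B}`; as
`(Λ^{A,B})*` is closed, a trivial kernel forces `(Λ^{A,B})* = Λ^{A,B}`.
-/

theorem Submodule.eq_of_le_of_orthogonal_inf_eq_bot {𝕜 E : Type*} [RCLike 𝕜]
    [NormedAddCommGroup E] [InnerProductSpace 𝕜 E] {K₁ K₂ : Submodule 𝕜 E}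
    [K₁.HasOrthogonalProjection] (h : K₁ ≤ K₂) (h' : K₁ᗮ ⊓ K₂ = ⊥) : K₁ = K₂ := by
  simpa [h'] using Submodule.sup_orthogonal_inf_of_hasOrthogonalProjection h

section

variable {E : Type*} [NormedAddCommGroup E] [InnerProductSpace ℂ E]

theorem isClosed_relAdjoint (Λ : Submodule ℂ (E × E)) :
    IsClosed (relAdjoint Λ : Set (E × E)) := by
  have : (relAdjoint Λ : Set (E × E)) =
      ⋂ q ∈ Λ, {p : E × E | (inner ℂ p.1 q.2 : ℂ) = inner ℂ p.2 q.1} := by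
    ext p; simp [relAdjoint]
  rw [this]
  exact isClosed_biInter fun q _ => isClosed_eq (by fun_prop) (by fun_prop)

theorem eq_zero_of_mem_of_mem_relAdjoint {Λ : Submodule ℂ (E × E)} {p : E × E} (hp : p ∈ Λ)
    (hp' : (p.2, -p.1) ∈ relAdjoint Λ) : p = 0 := by
  have h := congrArg RCLike.re (hp' p hp)
  simp only [inner_neg_left, map_neg, inner_self_eq_norm_sq] at h
  have h₁ : ‖p.1‖ = 0 := by nlinarith [norm_nonneg p.1, norm_nonneg p.2]
  have h₂ : ‖p.2‖ = 0 := by nlinarith [norm_nonneg p.1, norm_nonneg p.2]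
  exact Prod.ext (norm_eq_zero.1 h₁) (norm_eq_zero.1 h₂)

variable {A B : E →L[ℂ] E} {x : E × E}

theorem mem_lambdaAB : x ∈ LambdaAB A B ↔ A x.1 = B x.2 :=
  Iff.rfl

theorem MAB_eq_zero_iff : MAB A B x = 0 ↔ x ∈ LambdaAB A B ∧ B x.1 + A x.2 = 0 := by
  simp [MAB, mem_lambdaAB, Prod.ext_iff, sub_eq_zero]

theorem swap_neg_mem_lambdaAB_iff : (x.2, -x.1) ∈ LambdaAB A B ↔ B x.1 + A x.2 = 0 := by
  rw [mem_lambdaAB, map_neg, eq_neg_iff_add_eq_zero, add_comm]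

end

theorem adjoint_prod_mem_relAdjoint_lambdaAB (A B : G →L[ℂ] G) (y : G) :
    (adjoint B y, adjoint A y) ∈ relAdjoint (LambdaAB A B) := by
  intro q hq
  simp only [adjoint_inner_left, mem_lambdaAB.1 hq]

theorem relAdjoint_lambdaAB_le_iff {A B : G →L[ℂ] G} :
    relAdjoint (LambdaAB A B) ≤ LambdaAB A B ↔ A ∘L adjoint B = B ∘L adjoint A := by
  constructor
  · intro h
    ext y
    exact h (adjoint_prod_mem_relAdjoint_lambdaAB A B y)
  · intro hAB p hp
    refine ext_inner_right ℂ fun y => ?_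
    have hy : (adjoint B y, adjoint A y) ∈ LambdaAB A B :=
      mem_lambdaAB.2 (by simpa using congrArg (· y) hAB)
    simpa only [adjoint_inner_right] using hp _ hy

theorem lambdaAB_le_relAdjoint {A B : G →L[ℂ] G} (hAB : A ∘L adjoint B = B ∘L adjoint A)
    (hM : ∀ x, MAB A B x = 0 → x = 0) : LambdaAB A B ≤ relAdjoint (LambdaAB A B) := by
  -- `G × G` carries the sup norm; the orthogonal decomposition takes place in its `ℓ²` copy.
  let e : WithLp 2 (G × G) ≃L[ℂ] G × G := WithLp.prodContinuousLinearEquiv 2 ℂ G G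
  let K₁ := (relAdjoint (LambdaAB A B)).comap (e : WithLp 2 (G × G) →ₗ[ℂ] G × G)
  let K₂ := (LambdaAB A B).comap (e : WithLp 2 (G × G) →ₗ[ℂ] G × G)
  have : CompleteSpace K₁ := ((isClosed_relAdjoint _).preimage e.continuous).completeSpace_coe
  have hK : K₁ = K₂ := by
    refine Submodule.eq_of_le_of_orthogonal_inf_eq_bot
      (Submodule.comap_mono (relAdjoint_lambdaAB_le_iff.2 hAB)) ?_
    refine (Submodule.eq_bot_iff _).2 fun w ⟨hw₁, hw₂⟩ => ?_
    have hS : B (e w).1 + A (e w).2 = 0 := by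
      refine ext_inner_left ℂ fun y => ?_
      have hy : e.symm (adjoint B y, adjoint A y) ∈ K₁ := by
        simpa [K₁] using adjoint_prod_mem_relAdjoint_lambdaAB A B y
      simpa [inner_add_right, adjoint_inner_left, WithLp.prod_inner_apply, e]
        using (Submodule.mem_orthogonal K₁ w).1 hw₁ _ hy
    exact e.injective (by simpa using hM (e w) (MAB_eq_zero_iff.2 ⟨hw₂, hS⟩))
  exact (Submodule.comap_le_comap_iff_of_surjective e.surjective).1 hK.ge

theorem lambdaAB_isSelfAdjointRel_iff (A B : G →L[ℂ] G) :
    IsSelfAdjointRel (LambdaAB A B) ↔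
      (A ∘L adjoint B = B ∘L adjoint A ∧ ∀ x : G × G, MAB A B x = 0 → x = 0) := by
  constructor
  · intro (h : relAdjoint (LambdaAB A B) = LambdaAB A B)
    refine ⟨relAdjoint_lambdaAB_le_iff.1 h.le, fun x hx => ?_⟩
    obtain ⟨hx, hx'⟩ := MAB_eq_zero_iff.1 hx
    exact eq_zero_of_mem_of_mem_relAdjoint hx (by rw [h]; exact swap_neg_mem_lambdaAB_iff.2 hx')
  · rintro ⟨hAB, hM⟩
    exact le_antisymm (relAdjoint_lambdaAB_le_iff.2 hAB) (lambdaAB_le_relAdjoint hAB hM)
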